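/- arXiv:1504.03135 — 2 statements merged into one kernel-verified Lean document; each statement's English description precedes it below -/
import Mathlib

section
/- Fix β ∈ (0,1) and K > 0, and set u_T² = 2 ln T + (2/α + m - 2) ln ln T + O(1) for constants α ∈ (0,2], m ≥ 1. Then T² · u_T^{4/α + 2m - 2} · (ln T)^{-1} · exp(-u_T² / (1 + K/ln(T^β))) is bounded as T → ∞. -/
/-!
Write `L = ln T` and `v = u_T²`, so that `v = 2L + c ln L + O(1)` with `c = 2/α + m - 2`, and
`|u_T^{2(c+1)}| ≤ v^{c+1}`. Taking logarithms, the quantity is at most the exponential of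
`(2L + c ln L - v) + (c+1) ln (v/L) + (v - v/D)`, where `D = 1 + K/(βL)`. The first term is
`O(1)` by hypothesis; the second is bounded because `L ≤ v ≤ 3L` for large `T` (as `ln L = o(L)`);
and the third equals `vK/(βL + K) ≤ 3K/β`.
-/

open Filter Real

lemma abs_rpow_two_mul_le (x q : ℝ) : |x ^ (2 * q)| ≤ (x ^ 2) ^ q := by
  calc |x ^ (2 * q)| ≤ |x| ^ (2 * q) := abs_rpow_le_abs_rpow x _
    _ = (x ^ 2) ^ q := by rw [rpow_mul (abs_nonneg x), rpow_two, sq_abs]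

lemma sub_div_one_add_div_mul_le {v a L β K : ℝ} (hL : 0 < L) (hβ : 0 < β) (hK : 0 ≤ K)
    (hv₀ : 0 ≤ v) (hv : v ≤ a * L) : v - v / (1 + K / (β * L)) ≤ a * K / β := by
  have hβL : 0 < β * L := mul_pos hβ hL
  calc v - v / (1 + K / (β * L)) = v * K / (β * L + K) := by field_simp; ring
    _ ≤ a * L * K / (β * L) := by
        gcongr
        exacts [mul_nonneg (hv₀.trans hv) hK, le_add_of_nonneg_right hK]
    _ = a * K / β := by field_simp

lemma mul_log_div_le_abs_mul_log {q v a L : ℝ} (hL : 0 < L) (hlo : L ≤ v) (hhi : v ≤ a * L) :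
    q * log (v / L) ≤ |q| * log a := by
  have hratio : 1 ≤ v / L := (one_le_div hL).2 hlo
  have hlog₀ : 0 ≤ log (v / L) := log_nonneg hratio
  have hlog : log (v / L) ≤ log a :=
    log_le_log (by linarith) ((div_le_iff₀ hL).2 hhi)
  calc q * log (v / L) ≤ |q| * log (v / L) := mul_le_mul_of_nonneg_right (le_abs_self q) hlog₀
    _ ≤ |q| * log a := mul_le_mul_of_nonneg_left hlog (abs_nonneg q)

lemma eventually_abs_mul_log_add_le (c C : ℝ) : ∀ᶠ x : ℝ in atTop, |c * log x| + C ≤ x := by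
  have hsmall := (isLittleO_log_id_atTop.const_mul_left c).def (by norm_num : (0 : ℝ) < 1 / 2)
  filter_upwards [hsmall, eventually_ge_atTop (2 * C), eventually_ge_atTop 0] with x hx hxC hx₀
  rw [Real.norm_eq_abs, Real.norm_eq_abs, id, abs_of_nonneg hx₀] at hx
  linarith

lemma eventually_log_le_and_le_three_mul_log {v : ℝ → ℝ} {c C : ℝ}
    (hv : ∀ᶠ T in atTop, |v T - (2 * log T + c * log (log T))| ≤ C) :
    ∀ᶠ T in atTop, log T ≤ v T ∧ v T ≤ 3 * log T := by
  filter_upwards [hv, tendsto_log_atTop.eventually (eventually_abs_mul_log_add_le c C)]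
    with T hvT hsmall
  have hcL := neg_abs_le (c * log (log T))
  have hcL' := le_abs_self (c * log (log T))
  have hvT := abs_le.1 hvT
  constructor <;> linarith

lemma mul_rpow_mul_inv_mul_exp_le {T v c C β K : ℝ} (hT : 1 < T) (hβ : 0 < β) (hK : 0 ≤ K)
    (hv : |v - (2 * log T + c * log (log T))| ≤ C) (hlo : log T ≤ v) (hhi : v ≤ 3 * log T) :
    T ^ 2 * v ^ (c + 1) * (log T)⁻¹ * exp (-v / (1 + K / log (T ^ β))) ≤
      exp (C + |c + 1| * log 3 + 3 * K / β) := by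
  have hT₀ : 0 < T := by linarith
  have hL : 0 < log T := log_pos hT
  have hv₀ : 0 < v := hL.trans_le hlo
  have hleading : 2 * log T + c * log (log T) - v ≤ C := by linarith [(abs_le.1 hv).1]
  have hratio := mul_log_div_le_abs_mul_log (q := c + 1) hL hlo hhi
  have hdenom := sub_div_one_add_div_mul_le hL hβ hK hv₀.le hhi
  rw [log_rpow hT₀]
  calc T ^ 2 * v ^ (c + 1) * (log T)⁻¹ * exp (-v / (1 + K / (β * log T)))
      = exp ((2 * log T + c * log (log T) - v) + (c + 1) * log (v / log T)
          + (v - v / (1 + K / (β * log T)))) := by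
        have hinv : (log T)⁻¹ = exp (-log (log T)) := by rw [exp_neg, exp_log hL]
        rw [log_div hv₀.ne' hL.ne', rpow_def_of_pos hv₀, ← exp_log (pow_pos hT₀ 2), log_pow,
          hinv, ← exp_add, ← exp_add, ← exp_add]
        congr 1
        push_cast
        ring
    _ ≤ exp (C + |c + 1| * log 3 + 3 * K / β) := exp_le_exp.2 (by linarith)

theorem bounded_comparison_factor_general (α m β K : ℝ) (hβ0 : 0 < β) (hK : 0 < K) (u : ℝ → ℝ)
    (hu : ∃ C : ℝ, ∀ᶠ T in atTop,
      |u T ^ 2 - (2 * Real.log T + (2/α + m - 2) * Real.log (Real.log T))| ≤ C) :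
    ∃ M : ℝ, ∀ᶠ T in atTop,
      |T ^ 2 * u T ^ (4/α + 2*m - 2) * (Real.log T)⁻¹ *
        Real.exp (-(u T ^ 2) / (1 + K / Real.log (T ^ β)))| ≤ M := by
  obtain ⟨C, hC⟩ := hu
  refine ⟨exp (C + |2/α + m - 2 + 1| * log 3 + 3 * K / β), ?_⟩
  filter_upwards [hC, eventually_log_le_and_le_three_mul_log hC, eventually_gt_atTop 1]
    with T hCT ⟨hlo, hhi⟩ hT
  have hexponent : 4/α + 2*m - 2 = 2 * (2/α + m - 2 + 1) := by ring
  have hL : 0 < log T := log_pos hT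
  calc |T ^ 2 * u T ^ (4/α + 2*m - 2) * (log T)⁻¹ * exp (-(u T ^ 2) / (1 + K / log (T ^ β)))|
      = T ^ 2 * |u T ^ (4/α + 2*m - 2)| * (log T)⁻¹ *
          exp (-(u T ^ 2) / (1 + K / log (T ^ β))) := by
        rw [abs_mul, abs_mul, abs_mul, abs_of_nonneg (sq_nonneg T),
          abs_of_pos (inv_pos.2 hL), abs_of_pos (exp_pos _)]
    _ ≤ T ^ 2 * (u T ^ 2) ^ (2/α + m - 2 + 1) * (log T)⁻¹ *
          exp (-(u T ^ 2) / (1 + K / log (T ^ β))) := by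
        rw [hexponent]; gcongr; exact abs_rpow_two_mul_le _ _
    _ ≤ _ := mul_rpow_mul_inv_mul_exp_le hT hβ0 hK.le hCT hlo hhi

/-- With `u_T² = 2 ln T + (2/α + m - 2) ln ln T + O(1)`, `β ∈ (0,1)` and `K > 0`, the quantity
`T² · u_T^{4/α + 2m - 2} · (ln T)⁻¹ · exp(-u_T² / (1 + K / ln (T^β)))` stays bounded as
`T → ∞`. -/
theorem bounded_comparison_factor (α m β K : ℝ) (hα : 0 < α) (hα2 : α ≤ 2) (hm : 1 ≤ m)
    (hβ0 : 0 < β) (hβ1 : β < 1) (hK : 0 < K) (u : ℝ → ℝ)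
    (hu : ∃ C : ℝ, ∀ᶠ T in atTop,
      |u T ^ 2 - (2 * Real.log T + (2/α + m - 2) * Real.log (Real.log T))| ≤ C) :
    ∃ M : ℝ, ∀ᶠ T in atTop,
      |T ^ 2 * u T ^ (4/α + 2*m - 2) * (Real.log T)⁻¹ *
        Real.exp (-(u T ^ 2) / (1 + K / Real.log (T ^ β)))| ≤ M :=
  bounded_comparison_factor_general α m β K hβ0 hK u hu
end

section
/- Let X and Y be jointly standard Gaussian random variables with correlation ρ ∈ [0,1). Then P(X > u, Y > u) ≤ Φ̄(u) · Φ̄(u √((1-ρ)/(1+ρ))) · C for some absolute constant C, where Φ̄ is the standard normal survival function. -/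
open MeasureTheory ProbabilityTheory Real

/-- The standard normal survival function `Φ̄(u) = P(N(0,1) > u)`. -/
noncomputable def stdNormalSurvival (u : ℝ) : ℝ :=
  (gaussianReal 0 1 (Set.Ioi u)).toReal

/-!
Put `a = u √((1-ρ)/(1+ρ))`. By independence the rectangle `{Z₁ > u, Z₂ > a}` has probability
`Φ̄(u) Φ̄(a)`. Below `a`, cut the range of `Z₂` into bands of width `1/a`: on the `j`-th band the
density is at most `e^{j+1} φ(a)`, so by Mills' ratio the band has mass `≲ e^j Φ̄(a)`, while
`ρ Z₁ + √(1-ρ²) Z₂ > u` forces `Z₁ > u + (1+ρ) j / (ρ u)`, which costs a factor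
`e^{-(1+ρ) j / ρ} ≤ e^{-2j}` against `Φ̄(u)`. The geometric series converges. When `a ≤ 1` the
trivial bound `Φ̄(u)` suffices, since then `Φ̄(a) ≥ Φ̄(1)`.
-/

open Set

lemma ProbabilityTheory.IndepFun.measure_preimage_eq_prod_map {Ω α β : Type*}
    [MeasurableSpace Ω] [MeasurableSpace α] [MeasurableSpace β] {μ : Measure Ω} [IsFiniteMeasure μ]
    {X : Ω → α} {Y : Ω → β} (hXY : IndepFun X Y μ) (hX : AEMeasurable X μ)
    (hY : AEMeasurable Y μ) {s : Set (α × β)} (hs : MeasurableSet s) :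
    μ ((fun ω => (X ω, Y ω)) ⁻¹' s) = ((μ.map X).prod (μ.map Y)) s := by
  rw [← (indepFun_iff_map_prod_eq_prod_map_map hX hY).1 hXY,
    Measure.map_apply_of_aemeasurable (hX.prodMk hY) hs]

noncomputable abbrev stdNormalPDF (x : ℝ) : ℝ := gaussianPDFReal 0 1 x

lemma stdNormalPDF_nonneg (x : ℝ) : 0 ≤ stdNormalPDF x := gaussianPDFReal_nonneg 0 1 x

lemma stdNormalPDF_pos (x : ℝ) : 0 < stdNormalPDF x := gaussianPDFReal_pos 0 1 x one_ne_zero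

lemma stdNormalPDF_le_exp_mul {a b c : ℝ} (h : b ^ 2 ≤ a ^ 2 + 2 * c) :
    stdNormalPDF a ≤ exp c * stdNormalPDF b := by
  simp only [stdNormalPDF, gaussianPDFReal, NNReal.coe_one, mul_one, sub_zero]
  rw [mul_left_comm, ← exp_add]
  gcongr
  linarith

lemma stdNormalPDF_le_of_sub_le {a s x : ℝ} (ha : 0 ≤ a) (hx : a - s ≤ x) :
    stdNormalPDF x ≤ exp (a * s) * stdNormalPDF a := by
  apply stdNormalPDF_le_exp_mul
  rcases le_or_gt 0 (a - s) with has | has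
  · nlinarith [mul_le_mul hx hx has (has.trans hx), sq_nonneg s]
  · nlinarith

lemma stdNormalSurvival_eq_integral (x : ℝ) :
    stdNormalSurvival x = ∫ t in Ioi x, stdNormalPDF t := by
  rw [stdNormalSurvival, gaussianReal_apply_eq_integral 0 one_ne_zero, ENNReal.toReal_ofReal]
  exact setIntegral_nonneg measurableSet_Ioi fun t _ => stdNormalPDF_nonneg t

lemma stdNormalSurvival_nonneg (x : ℝ) : 0 ≤ stdNormalSurvival x := ENNReal.toReal_nonneg

lemma stdNormalSurvival_le_one (x : ℝ) : stdNormalSurvival x ≤ 1 := by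
  rw [stdNormalSurvival]
  exact ENNReal.toReal_le_of_le_ofReal zero_le_one (by simp [prob_le_one])

lemma ofReal_stdNormalSurvival (x : ℝ) :
    ENNReal.ofReal (stdNormalSurvival x) = gaussianReal 0 1 (Ioi x) :=
  ENNReal.ofReal_toReal (measure_ne_top _ _)

lemma stdNormalSurvival_antitone : Antitone stdNormalSurvival := fun _ _ h =>
  ENNReal.toReal_mono (measure_ne_top _ _) (measure_mono (Ioi_subset_Ioi h))

lemma stdNormalSurvival_le_stdNormalPDF_div {v : ℝ} (hv : 0 < v) :
    stdNormalSurvival v ≤ stdNormalPDF v / v := by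
  have hdom : ∀ t ∈ Ioi v, stdNormalPDF t ≤ exp (v ^ 2) * stdNormalPDF v * exp (-v * t) := by
    intro t _
    rw [mul_right_comm, ← exp_add]
    exact stdNormalPDF_le_exp_mul (by nlinarith [sq_nonneg (t - v)])
  calc stdNormalSurvival v
      ≤ ∫ t in Ioi v, exp (v ^ 2) * stdNormalPDF v * exp (-v * t) := by
        rw [stdNormalSurvival_eq_integral]
        exact setIntegral_mono_on (integrable_gaussianPDFReal 0 1).integrableOn
          ((integrableOn_exp_mul_Ioi (by linarith) v).const_mul _) measurableSet_Ioi hdom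
    _ = stdNormalPDF v / v := by
        rw [integral_const_mul, integral_exp_mul_Ioi (by linarith), neg_div_neg_eq,
          ← mul_div_assoc, mul_right_comm, ← exp_add, show v ^ 2 + -v * v = 0 by ring, exp_zero,
          one_mul]

lemma gaussianReal_Ioc_le {l r M : ℝ} (hlr : l ≤ r)
    (hM : ∀ x ∈ Ioc l r, stdNormalPDF x ≤ M) :
    gaussianReal 0 1 (Ioc l r) ≤ ENNReal.ofReal ((r - l) * M) := by
  rw [gaussianReal_apply 0 one_ne_zero, ENNReal.ofReal_mul (sub_nonneg.2 hlr), mul_comm,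
    ← Real.volume_Ioc, ← setLIntegral_const]
  exact setLIntegral_mono' measurableSet_Ioc fun x hx => ENNReal.ofReal_le_ofReal (hM x hx)

lemma ofReal_le_gaussianReal_Ioc {l r m : ℝ} (hlr : l ≤ r)
    (hm : ∀ x ∈ Ioc l r, m ≤ stdNormalPDF x) :
    ENNReal.ofReal ((r - l) * m) ≤ gaussianReal 0 1 (Ioc l r) := by
  rw [gaussianReal_apply 0 one_ne_zero, ENNReal.ofReal_mul (sub_nonneg.2 hlr), mul_comm,
    ← Real.volume_Ioc, ← setLIntegral_const]
  exact setLIntegral_mono' measurableSet_Ioc fun x hx => ENNReal.ofReal_le_ofReal (hm x hx)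

lemma stdNormalPDF_div_le_stdNormalSurvival {a : ℝ} (ha : 1 ≤ a) :
    stdNormalPDF a / a ≤ exp 2 * stdNormalSurvival a := by
  have ha0 : 0 < a := one_pos.trans_le ha
  have hlow : ∀ x ∈ Ioc a (a + 1 / a), exp (-2) * stdNormalPDF a ≤ stdNormalPDF x := by
    rintro x ⟨hax, hxa⟩
    have hxa' : x * a ≤ a * a + 1 :=
      calc x * a ≤ (a + 1 / a) * a := by gcongr
        _ = a * a + 1 := by field_simp
    calc exp (-2) * stdNormalPDF a ≤ exp (-2) * (exp 2 * stdNormalPDF x) := by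
          gcongr
          exact stdNormalPDF_le_exp_mul (by nlinarith)
      _ = stdNormalPDF x := by rw [← mul_assoc, ← exp_add]; simp
  have hIoc : ENNReal.ofReal (1 / a * (exp (-2) * stdNormalPDF a)) ≤ gaussianReal 0 1 (Ioi a) :=
    calc _ = ENNReal.ofReal ((a + 1 / a - a) * (exp (-2) * stdNormalPDF a)) := by ring_nf
      _ ≤ gaussianReal 0 1 (Ioc a (a + 1 / a)) :=
          ofReal_le_gaussianReal_Ioc (le_add_of_nonneg_right (by positivity)) hlow
      _ ≤ gaussianReal 0 1 (Ioi a) := measure_mono Ioc_subset_Ioi_self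
  rw [← ofReal_stdNormalSurvival, ENNReal.ofReal_le_ofReal_iff (stdNormalSurvival_nonneg a)]
    at hIoc
  calc stdNormalPDF a / a = exp 2 * (1 / a * (exp (-2) * stdNormalPDF a)) := by
        rw [← mul_assoc, ← mul_assoc, mul_comm (exp 2), mul_assoc _ (exp 2), ← exp_add]
        simp [div_eq_inv_mul]
    _ ≤ exp 2 * stdNormalSurvival a := by gcongr

lemma stdNormalSurvival_pos (x : ℝ) : 0 < stdNormalSurvival x :=
  calc 0 < stdNormalPDF (max x 1) / max x 1 / exp 2 := by
        have := stdNormalPDF_pos (max x 1)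
        positivity
    _ ≤ stdNormalSurvival (max x 1) :=
        (div_le_iff₀' (exp_pos 2)).2 (stdNormalPDF_div_le_stdNormalSurvival (le_max_right x 1))
    _ ≤ stdNormalSurvival x := stdNormalSurvival_antitone (le_max_left x 1)

lemma stdNormalSurvival_add_div_le {u s : ℝ} (hu : 1 ≤ u) (hs : 0 ≤ s) :
    stdNormalSurvival (u + s / u) ≤ exp 2 * exp (-s) * stdNormalSurvival u := by
  have hu0 : 0 < u := one_pos.trans_le hu
  have hpdf : stdNormalPDF (u + s / u) ≤ exp (-s) * stdNormalPDF u := by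
    apply stdNormalPDF_le_exp_mul
    have : (u + s / u) ^ 2 = u ^ 2 + 2 * s + (s / u) ^ 2 := by field_simp; ring
    nlinarith [sq_nonneg (s / u)]
  calc stdNormalSurvival (u + s / u)
      ≤ stdNormalPDF (u + s / u) / (u + s / u) :=
        stdNormalSurvival_le_stdNormalPDF_div (by positivity)
    _ ≤ exp (-s) * stdNormalPDF u / u :=
        div_le_div₀ (mul_nonneg (exp_nonneg _) (stdNormalPDF_nonneg u)) hpdf hu0
          (le_add_of_nonneg_right (by positivity))
    _ ≤ exp 2 * exp (-s) * stdNormalSurvival u := by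
        rw [mul_div_assoc, mul_comm (exp 2), mul_assoc]
        gcongr
        exact stdNormalPDF_div_le_stdNormalSurvival hu

lemma gaussianReal_Ioc_sub_div_le {a : ℝ} (ha : 1 ≤ a) (s : ℝ) :
    gaussianReal 0 1 (Ioc (a - (s + 1) / a) (a - s / a))
      ≤ ENNReal.ofReal (exp 2 * exp (s + 1) * stdNormalSurvival a) := by
  have ha0 : 0 < a := one_pos.trans_le ha
  have hM : ∀ x ∈ Ioc (a - (s + 1) / a) (a - s / a),
      stdNormalPDF x ≤ exp (s + 1) * stdNormalPDF a := by
    intro x hx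
    have := stdNormalPDF_le_of_sub_le ha0.le hx.1.le
    rwa [mul_div_cancel₀ _ ha0.ne'] at this
  refine (gaussianReal_Ioc_le (by gcongr; linarith) hM).trans (ENNReal.ofReal_le_ofReal ?_)
  calc (a - s / a - (a - (s + 1) / a)) * (exp (s + 1) * stdNormalPDF a)
      = exp (s + 1) * (stdNormalPDF a / a) := by field_simp; ring
    _ ≤ exp (s + 1) * (exp 2 * stdNormalSurvival a) := by
        gcongr
        exact stdNormalPDF_div_le_stdNormalSurvival ha
    _ = exp 2 * exp (s + 1) * stdNormalSurvival a := by ring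

lemma exists_nat_mem_Ioc_sub_div {a y : ℝ} (ha : 0 < a) (hy : y ≤ a) :
    ∃ j : ℕ, y ∈ Ioc (a - (j + 1) / a) (a - j / a) := by
  refine ⟨⌊(a - y) * a⌋₊, ?_, ?_⟩
  · rw [sub_lt_comm, lt_div_iff₀ ha]
    exact Nat.lt_floor_add_one _
  · rw [le_sub_comm, div_le_iff₀ ha]
    exact Nat.floor_le (mul_nonneg (sub_nonneg.2 hy) ha.le)

lemma tail_subset_union_slices {ρ q u a : ℝ} (hρ : 0 < ρ) (hq : 0 ≤ q) (hu : 0 < u)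
    (ha : 0 < a) (hqa : q * a = (1 - ρ) * u) (hqu : q * u = (1 + ρ) * a) :
    {p : ℝ × ℝ | u < p.1 ∧ u < ρ * p.1 + q * p.2} ⊆ Ioi u ×ˢ Ioi a ∪
      ⋃ j : ℕ, Ioi (u + (1 + ρ) * j / ρ / u) ×ˢ Ioc (a - (j + 1) / a) (a - j / a) := by
  rintro ⟨x, y⟩ ⟨hx, hxy⟩
  rcases lt_or_ge a y with hay | hya
  · exact Or.inl ⟨hx, hay⟩
  obtain ⟨j, hj⟩ := exists_nat_mem_Ioc_sub_div ha hya
  refine Or.inr (mem_iUnion.2 ⟨j, ?_, hj⟩)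
  have hqy : q * y ≤ q * a - (1 + ρ) * j / u := by
    have := mul_le_mul_of_nonneg_left hj.2 hq
    have e : q * (a - j / a) = q * a - (1 + ρ) * j / u := by
      field_simp
      linear_combination (-(j : ℝ)) * hqu
    linarith
  show u + (1 + ρ) * j / ρ / u < x
  have : ρ * (u + (1 + ρ) * j / ρ / u) = ρ * u + (1 + ρ) * j / u := by field_simp
  nlinarith

lemma gaussianReal_prod_slice_le {ρ u a : ℝ} (hρ : 0 < ρ) (hρ1 : ρ ≤ 1) (hu : 1 ≤ u)
    (ha : 1 ≤ a) (j : ℕ) :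
    ((gaussianReal 0 1).prod (gaussianReal 0 1))
        (Ioi (u + (1 + ρ) * j / ρ / u) ×ˢ Ioc (a - (j + 1) / a) (a - j / a))
      ≤ ENNReal.ofReal (exp 5 * stdNormalSurvival u * stdNormalSurvival a * exp (-1) ^ j) := by
  have hdecay : 2 * (j : ℝ) ≤ (1 + ρ) * j / ρ := by
    rw [le_div_iff₀ hρ]
    nlinarith [(j.cast_nonneg : (0 : ℝ) ≤ j)]
  have hZ₁ : stdNormalSurvival (u + (1 + ρ) * j / ρ / u)
      ≤ exp 2 * exp (-(2 * j)) * stdNormalSurvival u :=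
    (stdNormalSurvival_add_div_le hu (by positivity)).trans
      (mul_le_mul_of_nonneg_right (by gcongr) (stdNormalSurvival_nonneg u))
  rw [Measure.prod_prod, ← ofReal_stdNormalSurvival]
  calc _ ≤ ENNReal.ofReal (stdNormalSurvival (u + (1 + ρ) * j / ρ / u)) *
        ENNReal.ofReal (exp 2 * exp (j + 1) * stdNormalSurvival a) := by
        gcongr
        exact_mod_cast gaussianReal_Ioc_sub_div_le ha j
    _ ≤ ENNReal.ofReal (exp 2 * exp (-(2 * j)) * stdNormalSurvival u *
        (exp 2 * exp (j + 1) * stdNormalSurvival a)) := by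
        rw [← ENNReal.ofReal_mul (stdNormalSurvival_nonneg _)]
        gcongr
        exact mul_nonneg (by positivity) (stdNormalSurvival_nonneg a)
    _ = ENNReal.ofReal (exp 5 * stdNormalSurvival u * stdNormalSurvival a * exp (-1) ^ j) := by
        have hexp : exp 2 * exp (-(2 * j)) * (exp 2 * exp (j + 1)) = exp 5 * exp (-1) ^ j := by
          rw [← exp_nat_mul, ← exp_add, ← exp_add, ← exp_add, ← exp_add]
          ring_nf
        congr 1
        linear_combination stdNormalSurvival u * stdNormalSurvival a * hexp

lemma exp_neg_one_lt_one : exp (-1) < 1 := exp_lt_one_iff.2 (by norm_num)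

-- `1` for the rectangle above `a`, `e⁵ ∑ e⁻ʲ` for the bands below it.
noncomputable def tailConst : ℝ := 1 + exp 5 * (1 - exp (-1))⁻¹

lemma one_le_tailConst : 1 ≤ tailConst :=
  le_add_of_nonneg_right
    (mul_nonneg (exp_nonneg 5) (inv_nonneg.2 (sub_nonneg.2 exp_neg_one_lt_one.le)))

lemma gaussianReal_prod_tail_le {ρ q u a : ℝ} (hρ : 0 < ρ) (hρ1 : ρ ≤ 1) (hq : 0 ≤ q)
    (ha : 1 ≤ a) (hau : a ≤ u) (hqa : q * a = (1 - ρ) * u) (hqu : q * u = (1 + ρ) * a) :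
    ((gaussianReal 0 1).prod (gaussianReal 0 1)) {p | u < p.1 ∧ u < ρ * p.1 + q * p.2}
      ≤ ENNReal.ofReal (tailConst * stdNormalSurvival u * stdNormalSurvival a) := by
  set ν := gaussianReal 0 1
  have hu : 1 ≤ u := ha.trans hau
  have hΦ : 0 ≤ stdNormalSurvival u * stdNormalSurvival a :=
    mul_nonneg (stdNormalSurvival_nonneg u) (stdNormalSurvival_nonneg a)
  have hterm :
      ∀ j : ℕ, 0 ≤ exp 5 * stdNormalSurvival u * stdNormalSurvival a * exp (-1) ^ j :=
    fun j => mul_nonneg (by rw [mul_assoc]; exact mul_nonneg (exp_nonneg 5) hΦ) (by positivity)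
  have hsummable :
      Summable fun j : ℕ => exp 5 * stdNormalSurvival u * stdNormalSurvival a * exp (-1) ^ j :=
    (summable_geometric_of_lt_one (exp_nonneg _) exp_neg_one_lt_one).mul_left _
  calc (ν.prod ν) {p | u < p.1 ∧ u < ρ * p.1 + q * p.2}
      ≤ (ν.prod ν) (Ioi u ×ˢ Ioi a) + ∑' j : ℕ, (ν.prod ν)
          (Ioi (u + (1 + ρ) * j / ρ / u) ×ˢ Ioc (a - (j + 1) / a) (a - j / a)) :=
        (measure_mono (tail_subset_union_slices hρ hq (by linarith) (by linarith) hqa hqu)).trans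
          ((measure_union_le _ _).trans (by gcongr; exact measure_iUnion_le _))
    _ ≤ ENNReal.ofReal (stdNormalSurvival u * stdNormalSurvival a) + ∑' j : ℕ,
          ENNReal.ofReal (exp 5 * stdNormalSurvival u * stdNormalSurvival a * exp (-1) ^ j) := by
        gcongr with j
        · rw [Measure.prod_prod, ← ofReal_stdNormalSurvival, ← ofReal_stdNormalSurvival,
            ENNReal.ofReal_mul (stdNormalSurvival_nonneg u)]
        · exact gaussianReal_prod_slice_le hρ hρ1 hu ha j
    _ = _ := by
        rw [← ENNReal.ofReal_tsum_of_nonneg hterm hsummable,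
          ← ENNReal.ofReal_add hΦ (tsum_nonneg hterm), tsum_mul_left,
          tsum_geometric_of_lt_one (exp_nonneg _) exp_neg_one_lt_one, tailConst]
        ring_nf

lemma sqrt_one_sub_sq_eq {ρ : ℝ} (hρ : -1 < ρ) :
    √(1 - ρ ^ 2) = (1 + ρ) * √((1 - ρ) / (1 + ρ)) := by
  rw [← sqrt_sq (by linarith : 0 ≤ 1 + ρ), ← sqrt_mul (sq_nonneg _), sqrt_sq (by linarith)]
  congr 1
  field_simp
  ring

lemma gaussianReal_prod_tail_le_of_one_le {ρ u : ℝ} (hρ0 : 0 ≤ ρ) (hρ1 : ρ < 1)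
    (ha : 1 ≤ u * √((1 - ρ) / (1 + ρ))) :
    ((gaussianReal 0 1).prod (gaussianReal 0 1))
        {p | u < p.1 ∧ u < ρ * p.1 + √(1 - ρ ^ 2) * p.2}
      ≤ ENNReal.ofReal (tailConst * stdNormalSurvival u *
          stdNormalSurvival (u * √((1 - ρ) / (1 + ρ)))) := by
  rcases hρ0.eq_or_lt with rfl | hρ
  · have hset :
        {p : ℝ × ℝ | u < p.1 ∧ u < 0 * p.1 + √(1 - 0 ^ 2) * p.2} = Ioi u ×ˢ Ioi u := by
      ext p; simp
    have hΦ := stdNormalSurvival_nonneg u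
    rw [hset, Measure.prod_prod, ← ofReal_stdNormalSurvival, ← ENNReal.ofReal_mul hΦ]
    simp only [sub_zero, add_zero, div_one, sqrt_one, mul_one]
    gcongr
    nlinarith [mul_nonneg hΦ hΦ, one_le_tailConst]
  set r := √((1 - ρ) / (1 + ρ))
  have hr2 : (1 + ρ) * r ^ 2 = 1 - ρ := by
    rw [sq_sqrt (div_nonneg (by linarith) (by linarith))]
    field_simp
  have hr1 : r ≤ 1 := by nlinarith
  have hu : 0 < u := pos_of_mul_pos_left (one_pos.trans_le ha) (sqrt_nonneg _)
  rw [sqrt_one_sub_sq_eq (by linarith)]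
  exact gaussianReal_prod_tail_le hρ hρ1.le (by positivity) ha (mul_le_of_le_one_right hu.le hr1)
    (by linear_combination u * hr2) (by ring)

theorem exists_gaussianReal_prod_tail_le :
    ∃ C : ℝ, 0 < C ∧ ∀ ρ : ℝ, 0 ≤ ρ → ρ < 1 → ∀ u : ℝ,
      (((gaussianReal 0 1).prod (gaussianReal 0 1))
          {p | u < p.1 ∧ u < ρ * p.1 + √(1 - ρ ^ 2) * p.2}).toReal
        ≤ C * stdNormalSurvival u * stdNormalSurvival (u * √((1 - ρ) / (1 + ρ))) := by
  have hK := one_le_tailConst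
  have hΦ1 := stdNormalSurvival_pos 1
  refine ⟨tailConst / stdNormalSurvival 1, by positivity, fun ρ hρ0 hρ1 u => ?_⟩
  set a := u * √((1 - ρ) / (1 + ρ))
  have hΦu := stdNormalSurvival_nonneg u
  have hΦa := stdNormalSurvival_nonneg a
  rcases le_or_gt a 1 with ha | ha
  · have hC : 1 ≤ tailConst / stdNormalSurvival 1 * stdNormalSurvival a :=
      calc 1 ≤ tailConst / stdNormalSurvival 1 * stdNormalSurvival 1 := by
            rwa [div_mul_cancel₀ _ hΦ1.ne']
        _ ≤ _ := by gcongr; exact stdNormalSurvival_antitone ha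
    calc _ ≤ ((gaussianReal 0 1).prod (gaussianReal 0 1) (Ioi u ×ˢ univ)).toReal :=
          ENNReal.toReal_mono (measure_ne_top _ _) (measure_mono fun p hp => ⟨hp.1, trivial⟩)
      _ = stdNormalSurvival u := by rw [Measure.prod_prod, measure_univ, mul_one]; rfl
      _ ≤ _ := by nlinarith
  · have hKC : tailConst ≤ tailConst / stdNormalSurvival 1 :=
      le_div_self (by positivity) hΦ1 (stdNormalSurvival_le_one 1)
    refine ENNReal.toReal_le_of_le_ofReal (by positivity)
      ((gaussianReal_prod_tail_le_of_one_le hρ0 hρ1 ha.le).trans (ENNReal.ofReal_le_ofReal ?_))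
    gcongr

/-- Bivariate Gaussian tail bound: if `(X, Y)` are jointly standard Gaussian with correlation
`ρ ∈ [0,1)` (represented as `X = Z₁`, `Y = ρ Z₁ + √(1-ρ²) Z₂` with `Z₁, Z₂` independent
standard Gaussians), then `P(X > u, Y > u) ≤ C Φ̄(u) Φ̄(u √((1-ρ)/(1+ρ)))` for some absolute
constant `C`. -/
theorem bivariate_gaussian_tail_bound :
    ∃ C : ℝ, 0 < C ∧
      ∀ (Ω : Type) (_ : MeasurableSpace Ω) (μ : Measure Ω), IsProbabilityMeasure μ →
        ∀ (Z₁ Z₂ : Ω → ℝ) (ρ : ℝ), 0 ≤ ρ → ρ < 1 →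
          IndepFun Z₁ Z₂ μ →
          μ.map Z₁ = gaussianReal 0 1 → μ.map Z₂ = gaussianReal 0 1 →
          ∀ u : ℝ,
            (μ {ω | u < Z₁ ω ∧ u < ρ * Z₁ ω + Real.sqrt (1 - ρ^2) * Z₂ ω}).toReal ≤
              C * stdNormalSurvival u *
                stdNormalSurvival (u * Real.sqrt ((1 - ρ) / (1 + ρ))) := by
  obtain ⟨C, hC, hbound⟩ := exists_gaussianReal_prod_tail_le
  refine ⟨C, hC, fun Ω _ μ _ Z₁ Z₂ ρ hρ0 hρ1 hZ hZ₁ hZ₂ u => ?_⟩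
  set S := {p : ℝ × ℝ | u < p.1 ∧ u < ρ * p.1 + √(1 - ρ ^ 2) * p.2}
  have hS : MeasurableSet S :=
    (measurableSet_lt measurable_const measurable_fst).inter
      (measurableSet_lt measurable_const
        (by fun_prop : Measurable fun p : ℝ × ℝ => ρ * p.1 + √(1 - ρ ^ 2) * p.2))
  have hX : AEMeasurable Z₁ μ := .of_map_ne_zero (hZ₁ ▸ IsProbabilityMeasure.ne_zero _)
  have hY : AEMeasurable Z₂ μ := .of_map_ne_zero (hZ₂ ▸ IsProbabilityMeasure.ne_zero _)
  change (μ ((fun ω => (Z₁ ω, Z₂ ω)) ⁻¹' S)).toReal ≤ _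
  rw [hZ.measure_preimage_eq_prod_map hX hY hS, hZ₁, hZ₂]
  exact hbound ρ hρ0 hρ1 u
end
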